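/- For all integers r, f ≥ 0, one has the factorization of formal power series in u: e_u^{[r−1−f]}(b) = e_u^{[r]}(b) · (e_u^{[−1−f]}(τ^{−r}b))^⋆, where ⋆ is the substitution b_{−i} ↦ −b_{i+1} for all i ≥ 0; equivalently, for every m ≥ 0, e_m^{[r−1−f]}(b) = Σ_{j=0}^{m} e_j^{[r]}(b) · (e_{m−j}^{[−1−f]}(τ^{−r}b))^⋆. -/

import Mathlib

open Finset

noncomputable section

variable {R : Type*} [CommRing R]

/-- The formal power series `1/(1 - x·u)`. -/
def geomSeries (x : R) : PowerSeries R := PowerSeries.mk fun m => x ^ m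

/-- `e_u^{[k]}(c)`: the power series `∏_{i=1}^k (1 + c_i u)` for `k ≥ 0`, and
`∏_{i=1}^{-k} (1 - c_i u)⁻¹` for `k < 0`.  The sequence `c` is read at indices `1, 2, …`. -/
def eSer (k : ℤ) (c : ℕ → R) : PowerSeries R :=
  if 0 ≤ k then ∏ i ∈ Finset.range k.toNat, (1 + PowerSeries.C (c (i + 1)) * PowerSeries.X)
  else ∏ i ∈ Finset.range (-k).toNat, geomSeries (c (i + 1))

/-- `q_u(x) = ∏_{i=1}^n (1 + x_i u)/(1 - x_i u)`, with `n` x-variables. -/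
def qSer (n : ℕ) (x : ℕ → R) : PowerSeries R :=
  ∏ i ∈ Finset.range n,
    ((1 + PowerSeries.C (x (i + 1)) * PowerSeries.X) * geomSeries (x (i + 1)))

/-- The coefficient of `u^m` (`m : ℤ`) of a power series; zero when `m < 0`. -/
def coeffZ (m : ℤ) (φ : PowerSeries R) : R :=
  if 0 ≤ m then PowerSeries.coeff m.toNat φ else 0

/-- `q_m^{[ℓ]}(x|c)`: the coefficient of `u^m` in `q_u(x)·e_u^{[ℓ]}(c)`. -/
def qC (m ℓ : ℤ) (n : ℕ) (x c : ℕ → R) : R := coeffZ m (qSer n x * eSer ℓ c)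

/-- `q_m^{[k|ℓ]}(x;z|c)`: the coefficient of `u^m` in `q_u(x)·e_u^{[k]}(z)·e_u^{[ℓ]}(c)`. -/
def qC2 (m k ℓ : ℤ) (n : ℕ) (x z c : ℕ → R) : R :=
  coeffZ m (qSer n x * eSer k z * eSer ℓ c)

/-- `e_m^{[k]}(c)`. -/
def eC (m k : ℤ) (c : ℕ → R) : R := coeffZ m (eSer k c)

/-- `e_m^{[k|ℓ]}(z|c)`: the coefficient of `u^m` in `e_u^{[k]}(z)·e_u^{[ℓ]}(c)`. -/
def eC2 (m k ℓ : ℤ) (z c : ℕ → R) : R := coeffZ m (eSer k z * eSer ℓ c)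

/-- Extension of `b` to all integer indices using the convention `b_{-i} = -b_{i+1}` for
`i ≥ 0`; positive indices are untouched.  This also implements the `⋆` substitution. -/
def bext (b : ℤ → R) : ℤ → R := fun j => if 0 < j then b j else -b (1 - j)

/-- `ε(0) = 1` and `ε(m) = 2·(-1)^m` for `m ≥ 1`. -/
def pfEps (m : ℕ) : ℤ := if m = 0 then 1 else 2 * (-1) ^ m

/-- The subscript `α_i + Σ_{j>i} m_{ij} − Σ_{j<i} m_{ji}` in the Schur–Pfaffian. -/
def pfIdx {r : ℕ} (α : Fin r → ℤ) (m : Fin r → Fin r → ℕ) (i : Fin r) : ℤ :=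
  α i + ∑ j, (if i < j then (m i j : ℤ) else 0) - ∑ j, (if j < i then (m j i : ℤ) else 0)

/-- The Schur–Pfaffian `Pf[c^{(1)}_{α_1} ⋯ c^{(r)}_{α_r}]`, as the (finitely supported) sum
over tuples of nonnegative integers `(m_{ij})_{1 ≤ i < j ≤ r}`. -/
def schurPf {r : ℕ} (c : Fin r → ℤ → R) (α : Fin r → ℤ) : R :=
  ∑ᶠ m ∈ {m : Fin r → Fin r → ℕ | ∀ i j, ¬ i < j → m i j = 0},
    (∏ i, ∏ j, if i < j then (pfEps (m i j) : R) else 1) * ∏ i, c i (pfIdx α m i)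

/-- The alphabet of primed, unmarked and circled numbers. -/
inductive MSTEntry where
  | prime : ℕ → MSTEntry
  | unmarked : ℕ → MSTEntry
  | circ : ℕ → MSTEntry
deriving DecidableEq

namespace MSTEntry

/-- Whether an entry is circled (`1`) or not (`0`). -/
def isCirc : MSTEntry → ℕ
  | circ _ => 1
  | _ => 0

/-- Key realizing the order `1' < 1 < 2' < 2 < ⋯` within each class. -/
def key : MSTEntry → ℕ
  | prime k => 2 * k - 1
  | unmarked k => 2 * k
  | circ k => k

/-- The numeric value of an entry. -/
def val : MSTEntry → ℕ
  | prime k => k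
  | unmarked k => k
  | circ k => k

/-- The total order `1' < 1 < 2' < 2 < ⋯ < 1° < 2° < ⋯` on entries of positive value. -/
def le (a b : MSTEntry) : Prop :=
  a.isCirc < b.isCirc ∨ (a.isCirc = b.isCirc ∧ a.key ≤ b.key)

end MSTEntry

/-- The shifted Young diagram of a strict partition `λ` of length `r`:
boxes `(i, j)` with `1 ≤ i ≤ r` and `i ≤ j ≤ λ_i + i - 1` (rows and columns 1-indexed). -/
def shiftedDiag (r : ℕ) (lam : ℕ → ℕ) : Set (ℕ × ℕ) :=
  {p | 1 ≤ p.1 ∧ p.1 ≤ r ∧ p.1 ≤ p.2 ∧ p.2 ≤ lam p.1 + p.1 - 1}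

/-- `T` is a marked shifted tableau of the flagged strict partition `(λ, f)` whose unmarked
and primed entries have numeric value at most `n` (normalized to `unmarked 0` off the
diagram). -/
def IsMST (n r : ℕ) (lam f : ℕ → ℕ) (T : ℕ × ℕ → MSTEntry) : Prop :=
  (∀ p, p ∉ shiftedDiag r lam → T p = .unmarked 0) ∧
  (∀ p ∈ shiftedDiag r lam, 1 ≤ (T p).val) ∧
  (∀ i j j', (i, j) ∈ shiftedDiag r lam → (i, j') ∈ shiftedDiag r lam → j ≤ j' →
    (T (i, j)).le (T (i, j'))) ∧
  (∀ i i' j, (i, j) ∈ shiftedDiag r lam → (i', j) ∈ shiftedDiag r lam → i ≤ i' →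
    (T (i, j)).le (T (i', j))) ∧
  (∀ i i' j k k', (i, j) ∈ shiftedDiag r lam → (i', j) ∈ shiftedDiag r lam → i < i' →
    T (i, j) = .unmarked k → T (i', j) = .unmarked k' → k < k') ∧
  (∀ i j j' k k', (i, j) ∈ shiftedDiag r lam → (i, j') ∈ shiftedDiag r lam → j < j' →
    T (i, j) = .prime k → T (i, j') = .prime k' → k < k') ∧
  (∀ i j j' k k', (i, j) ∈ shiftedDiag r lam → (i, j') ∈ shiftedDiag r lam → j < j' →
    T (i, j) = .circ k → T (i, j') = .circ k' → k < k') ∧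
  (∀ p ∈ shiftedDiag r lam, (T p).le (.circ (f p.1))) ∧
  (∀ p ∈ shiftedDiag r lam, ∀ k, (T p = .unmarked k ∨ T p = .prime k) → k ≤ n)

/-- The factor of the weight `(xz|b)^T` contributed by the entry at box `p`.  The convention
`b_{-i} = -b_{i+1}` is implemented by `bext`. -/
def mstFactor (x z : ℕ → R) (b : ℤ → R) (p : ℕ × ℕ) : MSTEntry → R
  | .unmarked k => x k + bext b ((p.2 : ℤ) - (p.1 : ℤ))
  | .prime k => x k - bext b ((p.2 : ℤ) - (p.1 : ℤ))
  | .circ k => z k + bext b ((k : ℤ) + (p.1 : ℤ) - (p.2 : ℤ))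

/-- The weight `(xz|b)^T` of a marked shifted tableau. -/
def mstWeight (r : ℕ) (lam : ℕ → ℕ) (x z : ℕ → R) (b : ℤ → R) (T : ℕ × ℕ → MSTEntry) : R :=
  ∏ i ∈ Finset.range r, ∏ j ∈ Finset.range (lam (i + 1)),
    mstFactor x z b (i + 1, i + 1 + j) (T (i + 1, i + 1 + j))

/-- The flagged factorial Q-function `Q_{λ,f}(x;z|b)`, with `n` x-variables. -/
def Qflag (n r : ℕ) (lam f : ℕ → ℕ) (x z : ℕ → R) (b : ℤ → R) : R :=
  ∑ᶠ T ∈ {T : ℕ × ℕ → MSTEntry | IsMST n r lam f T}, mstWeight r lam x z b T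

/-- Ivanov's factorial Q-function `Q_λ(x|b)`: the case of the zero flag (no circled
entries, so the z-variables do not occur). -/
def QIvanov (n r : ℕ) (lam : ℕ → ℕ) (x : ℕ → R) (b : ℤ → R) : R :=
  Qflag n r lam (fun _ => 0) x (fun _ => 0) b

/-- The skew Young diagram `κ/ν`: boxes `(i, j)` with `1 ≤ i ≤ r`, `ν_i < j ≤ κ_i`. -/
def skewDiag (r : ℕ) (kap nu : ℕ → ℕ) : Set (ℕ × ℕ) :=
  {p | 1 ≤ p.1 ∧ p.1 ≤ r ∧ nu p.1 < p.2 ∧ p.2 ≤ kap p.1}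

/-- `t` is a row-strict flagged tableau of `(κ/ν, f)` (normalized to `0` off the diagram). -/
def IsRST (r : ℕ) (kap nu f : ℕ → ℕ) (t : ℕ × ℕ → ℕ) : Prop :=
  (∀ p, p ∉ skewDiag r kap nu → t p = 0) ∧
  (∀ p ∈ skewDiag r kap nu, 1 ≤ t p) ∧
  (∀ i j j', (i, j) ∈ skewDiag r kap nu → (i, j') ∈ skewDiag r kap nu → j < j' →
    t (i, j) < t (i, j')) ∧
  (∀ i i' j, (i, j) ∈ skewDiag r kap nu → (i', j) ∈ skewDiag r kap nu → i ≤ i' →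
    t (i, j) ≤ t (i', j)) ∧
  (∀ p ∈ skewDiag r kap nu, t p ≤ f p.1)

/-- The weight `∏_{e ∈ T} (z_{|e|} + b_{|e| + r(e) - c(e)})` of a row-strict flagged tableau. -/
def rstWeight (r : ℕ) (kap nu : ℕ → ℕ) (z : ℕ → R) (b : ℤ → R) (t : ℕ × ℕ → ℕ) : R :=
  ∏ i ∈ Finset.range r, ∏ j ∈ Finset.range (kap (i + 1) - nu (i + 1)),
    (z (t (i + 1, nu (i + 1) + 1 + j)) +
      b ((t (i + 1, nu (i + 1) + 1 + j) : ℤ) + ((i : ℤ) + 1) - ((nu (i + 1) : ℤ) + 1 + (j : ℤ))))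

/-- The row-strict flagged skew factorial Schur polynomial `s̃_{κ/ν,f}(z|b)`. -/
def sTilde (r : ℕ) (kap nu f : ℕ → ℕ) (z : ℕ → R) (b : ℤ → R) : R :=
  ∑ᶠ t ∈ {t : ℕ × ℕ → ℕ | IsRST r kap nu f t}, rstWeight r kap nu z b t

/-!
Lowering the index `k` of `e_u^{[k]}(b)` by one multiplies it by `(1 - b⋆_{1-k} u)⁻¹`: for
`k ≥ 1` the starred entry is `-b_k`, so this cancels the factor `1 + b_k u`, and for `k ≤ 0`
it appends the factor `(1 - b_{1-k} u)⁻¹`. Lowering `r` by `f + 1` thus multiplies `e_u^{[r]}(b)`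
by `∏_{i=1}^{f+1} (1 - b⋆_{i-r} u)⁻¹ = (e_u^{[-1-f]}(τ^{-r} b))^⋆`.
-/

open PowerSeries

theorem geomSeries_eq_rescale (x : R) : geomSeries x = rescale x (mk 1) := by
  simp [geomSeries, rescale_mk]

theorem one_add_C_mul_X_mul_geomSeries_neg (x : R) : (1 + C x * X) * geomSeries (-x) = 1 := by
  rw [geomSeries_eq_rescale, show 1 + C x * X = rescale (-x) (1 - X) by simp [rescale_X],
    ← map_mul, mul_comm, mk_one_mul_one_sub_eq_one, map_one]

theorem eSer_natCast (n : ℕ) (c : ℕ → R) :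
    eSer n c = ∏ i ∈ range n, (1 + C (c (i + 1)) * X) := by
  simp [eSer]

theorem eSer_neg_natCast (n : ℕ) (c : ℕ → R) :
    eSer (-n) c = ∏ i ∈ range n, geomSeries (c (i + 1)) := by
  simp only [eSer, Left.nonneg_neg_iff, Nat.cast_nonpos, neg_neg, Int.toNat_natCast]
  split_ifs with hn
  · simp [hn]
  · rfl

theorem eSer_sub_one (k : ℤ) (b : ℤ → R) :
    eSer (k - 1) (fun i => b i) = eSer k (fun i => b i) * geomSeries (bext b (1 - k)) := by
  rcases le_or_gt k 0 with hk | hk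
  · obtain ⟨n, rfl⟩ := Int.exists_eq_neg_ofNat hk
    rw [show -(n : ℤ) - 1 = -((n + 1 : ℕ) : ℤ) by push_cast; ring, eSer_neg_natCast,
      eSer_neg_natCast, prod_range_succ, bext, if_pos (by omega)]
    push_cast
    ring_nf
  · obtain ⟨n, rfl⟩ : ∃ n : ℕ, k = n + 1 := ⟨(k - 1).toNat, by omega⟩
    rw [add_sub_cancel_right, show (n : ℤ) + 1 = ((n + 1 : ℕ) : ℤ) by push_cast; ring,
      eSer_natCast, eSer_natCast, prod_range_succ, mul_assoc, bext, if_neg (by omega),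
      sub_sub_cancel, one_add_C_mul_X_mul_geomSeries_neg, mul_one]

theorem eSer_sub_natCast (k : ℤ) (n : ℕ) (b : ℤ → R) :
    eSer (k - n) (fun i => b i) =
      eSer k (fun i => b i) * ∏ i ∈ range n, geomSeries (bext b (i + 1 - k)) := by
  induction n with
  | zero => simp
  | succ n ih =>
    rw [Nat.cast_succ, ← sub_sub, eSer_sub_one, ih, prod_range_succ, mul_assoc]
    congr 4
    ring

/-- For all `r, f ≥ 0`, the factorization of formal power series
`e_u^{[r−1−f]}(b) = e_u^{[r]}(b) · (e_u^{[−1−f]}(τ^{−r}b))^⋆`, where `⋆` is the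
substitution `b_{−i} ↦ −b_{i+1}` for `i ≥ 0`.  Equivalently, for every `m ≥ 0`,
`e_m^{[r−1−f]}(b) = Σ_{j=0}^m e_j^{[r]}(b) · (e_{m−j}^{[−1−f]}(τ^{−r}b))^⋆`. -/
theorem statement_8 (R : Type*) [CommRing R] (r f : ℕ) (b : ℤ → R) :
    eSer ((r : ℤ) - 1 - (f : ℤ)) (fun i => b (i : ℤ)) =
      eSer (r : ℤ) (fun i => b (i : ℤ)) *
        eSer (-1 - (f : ℤ)) (fun i => bext b ((i : ℤ) - (r : ℤ))) := by
  rw [show (r : ℤ) - 1 - f = r - ((f + 1 : ℕ) : ℤ) by push_cast; ring,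
    show -1 - (f : ℤ) = -((f + 1 : ℕ) : ℤ) by push_cast; ring,
    eSer_sub_natCast, eSer_neg_natCast]
  push_cast
  rfl
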